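/- (Reverse involution on γ-Schur functions) Let ←ω be the linear map on the degree-n component of Sym_nc with ←ω(R_β) = R_{←β}, where ←β is the reverse composition. Then for α ≤ γ, ←ω(R_α^{(γ)}(A; t₁,...,t_{n-1})) = R_{←α}^{(←γ)}(A; t_{n-1},...,t₁), where the multivariate γ-Schur function is R_α^{(γ)}(t₁,...,t_{n-1}) = Σ_{β ≥ α, D(α)\D(β) ⊆ D(γ)} (Π_{i ∈ D(α)∩D(β^c)} t_i) R_β. In particular, at t₁=⋯=t_{n-1}=1, ←ω(R_α^{(γ)}(1)) = R_{←α}^{(←γ)}(1). -/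

import Mathlib

open Finset

noncomputable section

variable {F : Type*} [Field F]

/-- Descent sets of compositions of `n` are subsets of `{1,...,n-1}`. -/
def ground (n : ℕ) : Finset ℕ := Finset.Icc 1 (n - 1)

/-- Reversal of descent sets: `D(←β) = {n−i : i ∈ D(β)}`. -/
def rev (n : ℕ) (B : Finset ℕ) : Finset ℕ := B.image (fun i => n - i)

/-- The degree-`n` component of `Sym_nc` as the free module with ribbon basis `R_β`. -/
def Rib : Finset ℕ → (Finset ℕ →₀ F) := fun B => Finsupp.single B 1

/-- Multivariate `γ`-ribbon Schur functions
`R_α^{(γ)}(t₁,...,t_{n-1}) = Σ_{β ≥ α, D(α)\D(β) ⊆ D(γ)} (Π_{i ∈ D(α)∩D(β^c)} t_i) R_β`. -/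
def gSchurM (n : ℕ) (G A : Finset ℕ) (t : ℕ → F) : Finset ℕ →₀ F :=
  ∑ B ∈ A.powerset.filter (fun B => A \ B ⊆ G),
    (∏ i ∈ A ∩ (ground n \ B), t i) • Rib B

/-- The linear map `←ω` with `←ω(R_β) = R_{←β}`. -/
def omegaRev (n : ℕ) : (Finset ℕ →₀ F) →ₗ[F] (Finset ℕ →₀ F) :=
  Finsupp.lmapDomain F F (rev n)

/-! The reflection `i ↦ n - i` is an involution of `{1, …, n-1}`, so taking images under it
commutes with `⊆`, `\` and `∩` on subsets of `{1, …, n-1}`. Hence reversal `β ↦ ←β` is a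
bijection between the index sets of the two sums, and it carries the coefficient
`∏_{i ∈ D(α) ∩ D(β^c)} t_i` to `∏_{j ∈ D(←α) ∩ D(←β^c)} t_{n-j}`. -/

section Reversal

variable {n : ℕ}

lemma sub_sub_cancel_of_mem_ground {i : ℕ} (h : i ∈ ground n) : n - (n - i) = i := by
  simp only [ground, mem_Icc] at h; omega

lemma injOn_sub_ground : Set.InjOn (n - ·) (ground n : Set ℕ) := fun i hi j hj hij => by
  rw [← sub_sub_cancel_of_mem_ground hi, ← sub_sub_cancel_of_mem_ground hj]
  exact congrArg (n - ·) hij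

lemma rev_ground : rev n (ground n) = ground n := by
  ext j
  simp only [rev, ground, mem_image, mem_Icc]
  exact ⟨by rintro ⟨i, hi, rfl⟩; omega, fun hj => ⟨n - j, by omega, by omega⟩⟩

lemma rev_subset_ground {B : Finset ℕ} (hB : B ⊆ ground n) : rev n B ⊆ ground n :=
  rev_ground (n := n) ▸ image_subset_image hB

lemma rev_rev {B : Finset ℕ} (hB : B ⊆ ground n) : rev n (rev n B) = B := by
  rw [rev, rev, image_image]
  conv_rhs => rw [← image_id (s := B)]
  exact image_congr fun i hi => sub_sub_cancel_of_mem_ground (hB hi)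

lemma rev_subset_rev_iff {B C : Finset ℕ} (hB : B ⊆ ground n) (hC : C ⊆ ground n) :
    rev n B ⊆ rev n C ↔ B ⊆ C :=
  image_subset_image_iff_of_injOn injOn_sub_ground hB hC

lemma rev_sdiff {B C : Finset ℕ} (hB : B ⊆ ground n) (hC : C ⊆ B) :
    rev n (B \ C) = rev n B \ rev n C :=
  image_sdiff_of_injOn (injOn_sub_ground.mono (coe_subset.2 hB)) hC

lemma rev_inter {B C : Finset ℕ} (hB : B ⊆ ground n) (hC : C ⊆ ground n) :
    rev n (B ∩ C) = rev n B ∩ rev n C :=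
  image_inter_of_injOn B C
    (injOn_sub_ground.mono (Set.union_subset (coe_subset.2 hB) (coe_subset.2 hC)))

lemma prod_rev {S : Finset ℕ} (hS : S ⊆ ground n) (t : ℕ → F) :
    ∏ j ∈ rev n S, t (n - j) = ∏ i ∈ S, t i := by
  rw [rev, prod_image (injOn_sub_ground.mono (coe_subset.2 hS))]
  exact prod_congr rfl fun i hi => by rw [sub_sub_cancel_of_mem_ground (hS hi)]

lemma rev_mem_filter_powerset_iff {G A B : Finset ℕ} (hG : G ⊆ ground n) (hA : A ⊆ ground n)
    (hB : B ⊆ ground n) :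
    rev n B ∈ (rev n A).powerset.filter (fun C => rev n A \ C ⊆ rev n G) ↔
      B ∈ A.powerset.filter (fun C => A \ C ⊆ G) := by
  simp only [mem_filter, mem_powerset, rev_subset_rev_iff hB hA]
  refine and_congr_right fun hBA => ?_
  rw [← rev_sdiff hA hBA, rev_subset_rev_iff (sdiff_subset.trans hA) hG]

end Reversal

lemma omegaRev_rib (n : ℕ) (B : Finset ℕ) :
    omegaRev n (Rib B : Finset ℕ →₀ F) = Rib (rev n B) :=
  Finsupp.mapDomain_single

lemma omegaRev_gSchurM {n : ℕ} {G A : Finset ℕ} (hA : A ⊆ ground n) (hG : G ⊆ ground n)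
    (t : ℕ → F) :
    omegaRev n (gSchurM n G A t) = gSchurM n (rev n G) (rev n A) (fun i => t (n - i)) := by
  have subset_ground : ∀ {B}, B ∈ A.powerset.filter (fun C => A \ C ⊆ G) → B ⊆ ground n :=
    fun hB => (mem_powerset.1 (mem_filter.1 hB).1).trans hA
  have subset_ground_rev :
      ∀ {C}, C ∈ (rev n A).powerset.filter (fun C => rev n A \ C ⊆ rev n G) → C ⊆ ground n :=
    fun hC => (mem_powerset.1 (mem_filter.1 hC).1).trans (rev_subset_ground hA)
  simp only [gSchurM, map_sum, map_smul, omegaRev_rib]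
  refine sum_nbij' (rev n) (rev n) ?_ ?_ (fun B hB => rev_rev (subset_ground hB))
    (fun C hC => rev_rev (subset_ground_rev hC)) ?_
  · exact fun B hB => (rev_mem_filter_powerset_iff hG hA (subset_ground hB)).2 hB
  · intro C hC
    rw [← rev_mem_filter_powerset_iff hG hA (rev_subset_ground (subset_ground_rev hC)),
      rev_rev (subset_ground_rev hC)]
    exact hC
  · intro B hB
    have hB := subset_ground hB
    have index_rev : rev n A ∩ (ground n \ rev n B) = rev n (A ∩ (ground n \ B)) := by
      rw [rev_inter hA sdiff_subset, rev_sdiff subset_rfl hB, rev_ground]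
    rw [index_rev, prod_rev (inter_subset_left.trans hA)]

/-- Reverse involution on `γ`-Schur functions: for `α ≤ γ` compositions of `n`,
`←ω(R_α^{(γ)}(t₁,...,t_{n-1})) = R_{←α}^{(←γ)}(t_{n-1},...,t₁)`
(variable `t_i` goes to `t_{n-i}`); in particular, at `t₁ = ⋯ = t_{n-1} = 1`,
`←ω(R_α^{(γ)}(1)) = R_{←α}^{(←γ)}(1)`. -/
theorem stmt13 (n : ℕ) (G A : Finset ℕ)
    (hA : A ⊆ ground n) (hGA : G ⊆ A) :
    (∀ t : ℕ → F,
      omegaRev n (gSchurM n G A t)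
        = gSchurM n (rev n G) (rev n A) (fun i => t (n - i))) ∧
    omegaRev n (gSchurM n G A (fun _ => (1 : F)))
      = gSchurM n (rev n G) (rev n A) (fun _ => (1 : F)) :=
  ⟨omegaRev_gSchurM hA (hGA.trans hA), omegaRev_gSchurM hA (hGA.trans hA) _⟩
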